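/- Let A, A₁ be n×n real matrices and Δ > 0. Suppose there exist n×n real matrices P, U, P₂, P₃ with P symmetric positive definite and U symmetric positive definite, such that, with Φ₁₁ = P₂ᵀ(A + A₁) + (A + A₁)ᵀP₂, the symmetric 2n×2n block matrix with blocks [Φ₁₁, P − P₂ᵀ + (A + A₁)ᵀP₃; (P − P₂ᵀ + (A + A₁)ᵀP₃)ᵀ, −P₃ − P₃ᵀ + Δ·U] is negative definite, and the symmetric 3n×3n block matrix with blocks [Φ₁₁, P − P₂ᵀ + (A + A₁)ᵀP₃, −Δ·P₂ᵀA₁; *, −P₃ − P₃ᵀ, −Δ·P₃ᵀA₁; *, *, −Δ·U] (where * denotes the symmetric completion) is negative definite. Then the sampled-data system determined by (A, A₁, Δ) is asymptotically stable for all variable sampling instants with t_{k+1} − t_k ≤ Δ. -/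

import Mathlib

/-! On a sampling interval `[a, b]`, `b - a ≤ Δ`, the functional
`W r = x(r)ᵀ P x(r) + (b - r) ∫ₐʳ ẋᵀ U ẋ + ε ∫ₐʳ ‖x‖²` is nonincreasing. Indeed, adding the
descriptor identity `0 = 2 (P₂ x + P₃ ẋ)ᵀ ((A + A₁) x - A₁ (x - x(a)) - ẋ)` to `Ẇ` and bounding the
cross term `-2 cᵀ (x - x(a)) = -2 ∫ₐʳ cᵀ ẋ` by Young's inequality leaves a quadratic form in
`(x, ẋ)` that is affine in the weights `(r - a, b - r)`; at the two vertices of the weight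
simplex it is negative definite by the two LMIs (the second one after a Schur complement).
Hence `xᵀ P x` decreases, `x` is bounded and therefore uniformly Lipschitz, and
`∫₀^∞ ‖x‖² < ∞`; Barbalat's lemma gives `x → 0`. -/

open Matrix Filter

/-- A matrix acting on Euclidean space (so that `‖·‖` is the Euclidean norm). -/
noncomputable def mulVecE {n : ℕ} (M : Matrix (Fin n) (Fin n) ℝ)
    (x : EuclideanSpace ℝ (Fin n)) : EuclideanSpace ℝ (Fin n) :=
  WithLp.toLp 2 (M.mulVec x)

/-- The largest singular value of `M`, i.e. its ℓ²→ℓ² operator norm. -/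
noncomputable def sigmaMax {n : ℕ} (M : Matrix (Fin n) (Fin n) ℝ) : ℝ :=
  ‖Matrix.toEuclideanCLM (𝕜 := ℝ) (n := Fin n) M‖

/-- The smallest eigenvalue of a symmetric matrix, via the Rayleigh quotient. -/
noncomputable def sigmaMin {n : ℕ} (Q : Matrix (Fin n) (Fin n) ℝ) : ℝ :=
  sInf {r : ℝ | ∃ x : EuclideanSpace ℝ (Fin n), ‖x‖ = 1 ∧ inner (𝕜 := ℝ) x (mulVecE Q x) = r}

/-- An admissible sampling sequence for hold length `Δ`:
`t 0 = 0`, strictly increasing, steps at most `Δ`, tending to infinity. -/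
def AdmissibleSampling (Δ : ℝ) (t : ℕ → ℝ) : Prop :=
  t 0 = 0 ∧ StrictMono t ∧ (∀ k, t (k + 1) - t k ≤ Δ) ∧
    Filter.Tendsto t Filter.atTop Filter.atTop

/-- A solution of the sampled-data system `ẋ(t) = A x(t) + A₁ x(t_k)` on `[0,∞)`. -/
def IsSolution {n : ℕ} (A A₁ : Matrix (Fin n) (Fin n) ℝ) (t : ℕ → ℝ)
    (x : ℝ → EuclideanSpace ℝ (Fin n)) : Prop :=
  ContinuousOn x (Set.Ici 0) ∧
  ∀ k : ℕ, ∀ s ∈ Set.Icc (t k) (t (k + 1)),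
    HasDerivWithinAt x (mulVecE A (x s) + mulVecE A₁ (x (t k)))
      (Set.Icc (t k) (t (k + 1))) s

open Set MeasureTheory
open scoped NNReal Topology

section QuadraticForms

variable {ι : Type*} [Fintype ι]

lemma dotProduct_self_nonneg (v : ι → ℝ) : 0 ≤ v ⬝ᵥ v := by
  simpa using dotProduct_star_self_nonneg v

lemma dotProduct_self_eq_norm_sq (y : EuclideanSpace ℝ ι) : (y : ι → ℝ) ⬝ᵥ y = ‖y‖ ^ 2 := by
  rw [EuclideanSpace.real_norm_sq_eq]
  simp [dotProduct, sq]

lemma continuous_dotProduct_mulVec (M : Matrix ι ι ℝ) :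
    Continuous fun y : EuclideanSpace ℝ ι => (y : ι → ℝ) ⬝ᵥ M *ᵥ y := by
  fun_prop

lemma exists_dotProduct_mulVec_le_neg_mul (M : Matrix ι ι ℝ)
    (hM : ∀ y : ι → ℝ, y ≠ 0 → y ⬝ᵥ M *ᵥ y < 0) :
    ∃ ε > 0, ∀ y : ι → ℝ, y ⬝ᵥ M *ᵥ y ≤ -ε * (y ⬝ᵥ y) := by
  set f : EuclideanSpace ℝ ι → ℝ := fun y => (y : ι → ℝ) ⬝ᵥ M *ᵥ y
  rcases isEmpty_or_nonempty ι with hι | hι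
  · exact ⟨1, one_pos, fun y => by simp [dotProduct]⟩
  have hne : (Metric.sphere (0 : EuclideanSpace ℝ ι) 1).Nonempty :=
    NormedSpace.sphere_nonempty.2 zero_le_one
  obtain ⟨u, hu, hmax⟩ := (isCompact_sphere (0 : EuclideanSpace ℝ ι) 1).exists_isMaxOn hne
    (continuous_dotProduct_mulVec M).continuousOn
  have hu0 : (u : ι → ℝ) ≠ 0 := by
    rintro h
    simp [show u = 0 from WithLp.ofLp_injective 2 h] at hu
  refine ⟨-f u, neg_pos.2 (hM _ hu0), fun y => ?_⟩
  rcases eq_or_ne y 0 with rfl | hy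
  · simp
  set Y : EuclideanSpace ℝ ι := WithLp.toLp 2 y
  have hY : 0 < ‖Y‖ := norm_pos_iff.2 (by simpa [Y] using hy)
  have hYy : y ⬝ᵥ y = ‖Y‖ ^ 2 := dotProduct_self_eq_norm_sq Y
  have hscaled : f (‖Y‖⁻¹ • Y) ≤ f u := hmax (by simp [norm_smul, hY.ne'])
  have hf : f (‖Y‖⁻¹ • Y) = ‖Y‖⁻¹ ^ 2 * (y ⬝ᵥ M *ᵥ y) := by
    simp [f, Y, mulVec_smul, sq, mul_assoc]
  calc y ⬝ᵥ M *ᵥ y = ‖Y‖ ^ 2 * (‖Y‖⁻¹ ^ 2 * (y ⬝ᵥ M *ᵥ y)) := by field_simp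
    _ ≤ ‖Y‖ ^ 2 * f u := by rw [← hf]; gcongr
    _ = - -f u * (y ⬝ᵥ y) := by rw [hYy]; ring

lemma Matrix.PosDef.exists_pos_mul_dotProduct_self_le {P : Matrix ι ι ℝ} (hP : P.PosDef) :
    ∃ ε > 0, ∀ y : ι → ℝ, ε * (y ⬝ᵥ y) ≤ y ⬝ᵥ P *ᵥ y := by
  obtain ⟨ε, hε, h⟩ := exists_dotProduct_mulVec_le_neg_mul (-P) fun y hy => by
    simpa [neg_mulVec] using hP.dotProduct_mulVec_pos hy
  exact ⟨ε, hε, fun y => by simpa [neg_mulVec] using h y⟩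

lemma sumElim_dotProduct_fromBlocks_mulVec {κ : Type*} [Fintype κ] (M₁₁ : Matrix ι ι ℝ)
    (M₁₂ : Matrix ι κ ℝ) (M₂₁ : Matrix κ ι ℝ) (M₂₂ : Matrix κ κ ℝ) (u : ι → ℝ) (v : κ → ℝ) :
    Sum.elim u v ⬝ᵥ fromBlocks M₁₁ M₁₂ M₂₁ M₂₂ *ᵥ Sum.elim u v =
      u ⬝ᵥ M₁₁ *ᵥ u + u ⬝ᵥ M₁₂ *ᵥ v + v ⬝ᵥ M₂₁ *ᵥ u + v ⬝ᵥ M₂₂ *ᵥ v := by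
  rw [fromBlocks_mulVec, sumElim_dotProduct_sumElim, dotProduct_add, dotProduct_add,
    Sum.elim_comp_inl, Sum.elim_comp_inr]
  ring

lemma Matrix.PosDef.two_mul_dotProduct_le [DecidableEq ι] {U : Matrix ι ι ℝ} (hU : U.PosDef)
    (b w : ι → ℝ) : 2 * (b ⬝ᵥ w) ≤ b ⬝ᵥ U⁻¹ *ᵥ b + w ⬝ᵥ U *ᵥ w := by
  have hUv : U *ᵥ (U⁻¹ *ᵥ b) = b := by
    rw [mulVec_mulVec, mul_nonsing_inv U (isUnit_iff_ne_zero.2 hU.det_pos.ne'), one_mulVec]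
  have hcross : U⁻¹ *ᵥ b ⬝ᵥ U *ᵥ w = b ⬝ᵥ w := by
    rw [← dotProduct_transpose_mulVec, show Uᵀ = U from hU.1, hUv, dotProduct_comm]
  have hsq := hU.posSemidef.dotProduct_mulVec_nonneg (w - U⁻¹ *ᵥ b)
  simp only [star_trivial, mulVec_sub, hUv, sub_dotProduct, dotProduct_sub, hcross] at hsq
  linarith [dotProduct_comm b w, dotProduct_comm (U⁻¹ *ᵥ b) b]

-- A Schur-complement step: for `W u = Bᵀ ζ` the form at `(ζ, u)` is `ζᵀ M ζ + (Bᵀ ζ)ᵀ u`.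
lemma dotProduct_mulVec_add_le_of_fromBlocks {κ : Type*} [Fintype κ] {M : Matrix ι ι ℝ}
    {B : Matrix ι κ ℝ} {W : Matrix κ κ ℝ} {ε : ℝ} (hε : 0 ≤ ε)
    (h : ∀ y, y ⬝ᵥ fromBlocks M B Bᵀ (-W) *ᵥ y ≤ -ε * (y ⬝ᵥ y))
    {ζ : ι → ℝ} {u : κ → ℝ} (hu : W *ᵥ u = Bᵀ *ᵥ ζ) :
    ζ ⬝ᵥ M *ᵥ ζ + Bᵀ *ᵥ ζ ⬝ᵥ u ≤ -ε * (ζ ⬝ᵥ ζ) := by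
  have hy := h (Sum.elim ζ u)
  rw [sumElim_dotProduct_fromBlocks_mulVec, sumElim_dotProduct_sumElim, neg_mulVec, hu,
    dotProduct_mulVec ζ B, ← mulVec_transpose, dotProduct_neg, dotProduct_comm u] at hy
  nlinarith [dotProduct_self_nonneg u]

/- The left side is affine in `(τ, ρ)` with nonnegative slopes, so it is bounded by its value at
`ρ = Δ` (first LMI) or at `τ = Δ` (second LMI, evaluated at `(X, D, -U⁻¹ (G₂ᵀ X + G₃ᵀ D))`). -/
lemma exists_neg_bound_of_LMIs [DecidableEq ι] {Φ₁₁ Φ₁₂ Φ₂₂ G₂ G₃ U : Matrix ι ι ℝ} {Δ : ℝ}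
    (hU : U.PosDef)
    (h₁ : ∀ y : ι ⊕ ι → ℝ, y ≠ 0 →
      y ⬝ᵥ fromBlocks Φ₁₁ Φ₁₂ Φ₁₂ᵀ (Φ₂₂ + Δ • U) *ᵥ y < 0)
    (h₂ : ∀ y : (ι ⊕ ι) ⊕ ι → ℝ, y ≠ 0 →
      y ⬝ᵥ fromBlocks (fromBlocks Φ₁₁ Φ₁₂ Φ₁₂ᵀ Φ₂₂) (fromRows (-(Δ • G₂)) (-(Δ • G₃)))
        (fromCols (-(Δ • G₂))ᵀ (-(Δ • G₃))ᵀ) (-(Δ • U)) *ᵥ y < 0) :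
    ∃ ε > 0, ∀ X D : ι → ℝ, ∀ τ ρ : ℝ, 0 ≤ τ → 0 ≤ ρ → τ + ρ ≤ Δ →
      Sum.elim X D ⬝ᵥ fromBlocks Φ₁₁ Φ₁₂ Φ₁₂ᵀ Φ₂₂ *ᵥ Sum.elim X D + ρ * (D ⬝ᵥ U *ᵥ D)
        + τ * ((G₂ᵀ *ᵥ X + G₃ᵀ *ᵥ D) ⬝ᵥ U⁻¹ *ᵥ (G₂ᵀ *ᵥ X + G₃ᵀ *ᵥ D))
        ≤ -ε * (X ⬝ᵥ X + D ⬝ᵥ D) := by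
  obtain ⟨ε₁, hε₁, hb₁⟩ := exists_dotProduct_mulVec_le_neg_mul _ h₁
  obtain ⟨ε₂, hε₂, hb₂⟩ := exists_dotProduct_mulVec_le_neg_mul _ h₂
  rw [← transpose_fromRows] at hb₂
  refine ⟨min ε₁ ε₂, lt_min hε₁ hε₂, fun X D τ ρ hτ hρ hτρ => ?_⟩
  set c := G₂ᵀ *ᵥ X + G₃ᵀ *ᵥ D
  have hUc : U *ᵥ (U⁻¹ *ᵥ c) = c := by
    rw [mulVec_mulVec, mul_nonsing_inv U (isUnit_iff_ne_zero.2 hU.det_pos.ne'), one_mulVec]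
  have hζ : Sum.elim X D ⬝ᵥ Sum.elim X D = X ⬝ᵥ X + D ⬝ᵥ D := sumElim_dotProduct_sumElim ..
  have hLMI₁ : Sum.elim X D ⬝ᵥ fromBlocks Φ₁₁ Φ₁₂ Φ₁₂ᵀ Φ₂₂ *ᵥ Sum.elim X D + Δ * (D ⬝ᵥ U *ᵥ D)
      ≤ -ε₁ * (X ⬝ᵥ X + D ⬝ᵥ D) := by
    have := hb₁ (Sum.elim X D)
    rw [sumElim_dotProduct_fromBlocks_mulVec, add_mulVec, smul_mulVec, dotProduct_add,
      dotProduct_smul, smul_eq_mul, hζ] at this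
    rw [sumElim_dotProduct_fromBlocks_mulVec]
    linarith
  have hLMI₂ : Sum.elim X D ⬝ᵥ fromBlocks Φ₁₁ Φ₁₂ Φ₁₂ᵀ Φ₂₂ *ᵥ Sum.elim X D
      + Δ * (c ⬝ᵥ U⁻¹ *ᵥ c) ≤ -ε₂ * (X ⬝ᵥ X + D ⬝ᵥ D) := by
    have := dotProduct_mulVec_add_le_of_fromBlocks hε₂.le hb₂ (ζ := Sum.elim X D)
      (u := -(U⁻¹ *ᵥ c)) (by
        rw [transpose_fromRows, fromCols_mulVec_sumElim, mulVec_neg, smul_mulVec, hUc]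
        simp only [c, transpose_neg, transpose_smul, neg_mulVec, smul_mulVec, smul_add, neg_add])
    rw [transpose_fromRows, fromCols_mulVec_sumElim, hζ] at this
    simp only [transpose_neg, transpose_smul, neg_mulVec, smul_mulVec, ← neg_add, ← smul_add,
      neg_dotProduct, dotProduct_neg, neg_neg, smul_dotProduct, smul_eq_mul] at this
    exact this
  have ha : 0 ≤ D ⬝ᵥ U *ᵥ D := by simpa using hU.posSemidef.dotProduct_mulVec_nonneg D
  have hγ : 0 ≤ c ⬝ᵥ U⁻¹ *ᵥ c := by simpa using hU.inv.posSemidef.dotProduct_mulVec_nonneg c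
  have hζ0 : 0 ≤ X ⬝ᵥ X + D ⬝ᵥ D := by rw [← hζ]; exact dotProduct_self_nonneg _
  have hmin₁ := mul_le_mul_of_nonneg_right (min_le_left ε₁ ε₂) hζ0
  have hmin₂ := mul_le_mul_of_nonneg_right (min_le_right ε₁ ε₂) hζ0
  rcases le_total (D ⬝ᵥ U *ᵥ D) (c ⬝ᵥ U⁻¹ *ᵥ c) with h | h <;> nlinarith

def descriptorMatrix (A A₁ P P₂ P₃ : Matrix ι ι ℝ) : Matrix (ι ⊕ ι) (ι ⊕ ι) ℝ :=
  fromBlocks (P₂ᵀ * (A + A₁) + (A + A₁)ᵀ * P₂) (P - P₂ᵀ + (A + A₁)ᵀ * P₃)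
    (P - P₂ᵀ + (A + A₁)ᵀ * P₃)ᵀ (-P₃ - P₃ᵀ)

lemma sumElim_dotProduct_descriptorMatrix_mulVec (A A₁ P P₂ P₃ : Matrix ι ι ℝ) {X X₀ D : ι → ℝ}
    (hD : D = A *ᵥ X + A₁ *ᵥ X₀) :
    Sum.elim X D ⬝ᵥ descriptorMatrix A A₁ P P₂ P₃ *ᵥ Sum.elim X D =
      2 * (X ⬝ᵥ P *ᵥ D) + 2 * (((P₂ᵀ * A₁)ᵀ *ᵥ X + (P₃ᵀ * A₁)ᵀ *ᵥ D) ⬝ᵥ (X - X₀)) := by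
  have hc : ((P₂ᵀ * A₁)ᵀ *ᵥ X + (P₃ᵀ * A₁)ᵀ *ᵥ D) ⬝ᵥ (X - X₀)
      = (P₂ *ᵥ X + P₃ *ᵥ D) ⬝ᵥ ((A + A₁) *ᵥ X - D) := by
    rw [transpose_mul, transpose_mul, transpose_transpose, transpose_transpose, ← mulVec_mulVec,
      ← mulVec_mulVec, ← mulVec_add, dotProduct_comm, Matrix.dotProduct_transpose_mulVec, hD,
      mulVec_sub, add_mulVec]
    abel_nf
  rw [hc]
  simp only [descriptorMatrix, sumElim_dotProduct_fromBlocks_mulVec, add_mulVec, sub_mulVec,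
    neg_mulVec, dotProduct_add, dotProduct_sub, dotProduct_neg, transpose_add, transpose_sub,
    transpose_mul, transpose_transpose, ← mulVec_mulVec, Matrix.dotProduct_transpose_mulVec,
    add_dotProduct]
  rw [dotProduct_comm (A *ᵥ X) (P₂ *ᵥ X), dotProduct_comm (A₁ *ᵥ X) (P₂ *ᵥ X),
    dotProduct_comm (A *ᵥ X) (P₃ *ᵥ D), dotProduct_comm (A₁ *ᵥ X) (P₃ *ᵥ D),
    dotProduct_comm D (P₂ *ᵥ X), dotProduct_comm D (P₃ *ᵥ D)]
  ring

def LKInequality [DecidableEq ι] (A A₁ P U P₂ P₃ : Matrix ι ι ℝ) (Δ ε : ℝ) : Prop :=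
  ∀ X D : ι → ℝ, ∀ τ ρ : ℝ, 0 ≤ τ → 0 ≤ ρ → τ + ρ ≤ Δ →
    Sum.elim X D ⬝ᵥ descriptorMatrix A A₁ P P₂ P₃ *ᵥ Sum.elim X D + ρ * (D ⬝ᵥ U *ᵥ D)
      + τ * (((P₂ᵀ * A₁)ᵀ *ᵥ X + (P₃ᵀ * A₁)ᵀ *ᵥ D) ⬝ᵥ U⁻¹ *ᵥ ((P₂ᵀ * A₁)ᵀ *ᵥ X + (P₃ᵀ * A₁)ᵀ *ᵥ D))
      ≤ -ε * (X ⬝ᵥ X + D ⬝ᵥ D)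

/- With `τ = r - a`, `ρ = b - r` and `I = ∫ₐʳ ẋᵀ U ẋ`, the left side is the derivative at `r` of
the functional in `antitoneOn_lkFunctional`, and `hI` is the integrated Young inequality. -/
lemma LKInequality.derivative_le_zero [DecidableEq ι] {A A₁ P U P₂ P₃ : Matrix ι ι ℝ} {Δ ε : ℝ}
    (hkey : LKInequality A A₁ P U P₂ P₃ Δ ε) (hε : 0 ≤ ε) {X X₀ D : ι → ℝ}
    (hD : D = A *ᵥ X + A₁ *ᵥ X₀) {τ ρ I : ℝ} (hτ : 0 ≤ τ) (hρ : 0 ≤ ρ) (hτρ : τ + ρ ≤ Δ)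
    (hI : -2 * (((P₂ᵀ * A₁)ᵀ *ᵥ X + (P₃ᵀ * A₁)ᵀ *ᵥ D) ⬝ᵥ (X - X₀)) ≤
      τ * (((P₂ᵀ * A₁)ᵀ *ᵥ X + (P₃ᵀ * A₁)ᵀ *ᵥ D) ⬝ᵥ U⁻¹ *ᵥ ((P₂ᵀ * A₁)ᵀ *ᵥ X + (P₃ᵀ * A₁)ᵀ *ᵥ D))
        + I) :
    2 * (X ⬝ᵥ P *ᵥ D) - I + ρ * (D ⬝ᵥ U *ᵥ D) + ε * (X ⬝ᵥ X) ≤ 0 := by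
  have hΦ := sumElim_dotProduct_descriptorMatrix_mulVec A A₁ P P₂ P₃ hD
  have := hkey X D τ ρ hτ hρ hτρ
  nlinarith [dotProduct_self_nonneg D]

end QuadraticForms

lemma mulVecE_eq_toEuclideanCLM {n : ℕ} (M : Matrix (Fin n) (Fin n) ℝ) :
    mulVecE M = Matrix.toEuclideanCLM (𝕜 := ℝ) M := rfl

lemma inner_mulVecE {n : ℕ} (M : Matrix (Fin n) (Fin n) ℝ) (u v : EuclideanSpace ℝ (Fin n)) :
    inner ℝ (mulVecE M u) v = (v : Fin n → ℝ) ⬝ᵥ M *ᵥ u := by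
  simp [EuclideanSpace.inner_eq_star_dotProduct, mulVecE]

lemma HasDerivAt.dotProduct_mulVec {n : ℕ} {x : ℝ → EuclideanSpace ℝ (Fin n)}
    {x' : EuclideanSpace ℝ (Fin n)} {r : ℝ} (M : Matrix (Fin n) (Fin n) ℝ)
    (hx : HasDerivAt x x' r) :
    HasDerivAt (fun s => (x s : Fin n → ℝ) ⬝ᵥ M *ᵥ x s)
      ((x' : Fin n → ℝ) ⬝ᵥ M *ᵥ x r + (x r : Fin n → ℝ) ⬝ᵥ M *ᵥ x') r := by
  have hMx : HasDerivAt (fun s => mulVecE M (x s)) (mulVecE M x') r := by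
    rw [mulVecE_eq_toEuclideanCLM]
    exact (Matrix.toEuclideanCLM (𝕜 := ℝ) M).hasFDerivAt.comp_hasDerivAt r hx
  simpa only [inner_mulVecE, add_comm] using hMx.inner ℝ hx

lemma HasDerivAt.dotProduct_const {n : ℕ} {x : ℝ → EuclideanSpace ℝ (Fin n)}
    {x' : EuclideanSpace ℝ (Fin n)} {r : ℝ} (c : Fin n → ℝ) (hx : HasDerivAt x x' r) :
    HasDerivAt (fun s => c ⬝ᵥ (x s : Fin n → ℝ)) (c ⬝ᵥ (x' : Fin n → ℝ)) r := by
  simpa [EuclideanSpace.inner_eq_star_dotProduct, dotProduct_comm c] using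
    (hasDerivAt_const r (WithLp.toLp 2 c : EuclideanSpace ℝ (Fin n))).inner ℝ hx

lemma hasDerivAt_integral_of_continuousOn {f : ℝ → ℝ} {a b r : ℝ}
    (hf : ContinuousOn f (Icc a b)) (hr : r ∈ Ioo a b) :
    HasDerivAt (fun u => ∫ s in a..u, f s) (f r) r :=
  intervalIntegral.integral_hasDerivAt_right
    ((hf.mono (Icc_subset_Icc_right hr.2.le)).intervalIntegrable_of_Icc hr.1.le)
    ((hf.mono Ioo_subset_Icc_self).stronglyMeasurableAtFilter isOpen_Ioo r hr)
    (hf.continuousAt (Icc_mem_nhds hr.1 hr.2))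

lemma norm_mulVecE_le {n : ℕ} (M : Matrix (Fin n) (Fin n) ℝ) (y : EuclideanSpace ℝ (Fin n)) :
    ‖mulVecE M y‖ ≤ sigmaMax M * ‖y‖ :=
  (Matrix.toEuclideanCLM (𝕜 := ℝ) M).le_opNorm y

lemma neg_two_mul_dotProduct_sub_le {n : ℕ} {U : Matrix (Fin n) (Fin n) ℝ} (hU : U.PosDef)
    {x d : ℝ → EuclideanSpace ℝ (Fin n)} {a r : ℝ} (har : a ≤ r)
    (hxc : ContinuousOn x (Icc a r)) (hx : ∀ s ∈ Ioo a r, HasDerivAt x (d s) s)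
    (hd : ContinuousOn d (Icc a r)) (c : Fin n → ℝ) :
    -2 * (c ⬝ᵥ ((x r : Fin n → ℝ) - x a)) ≤
      (r - a) * (c ⬝ᵥ U⁻¹ *ᵥ c) + ∫ s in a..r, (d s : Fin n → ℝ) ⬝ᵥ U *ᵥ d s := by
  have hcd : IntervalIntegrable (fun s => c ⬝ᵥ (d s : Fin n → ℝ)) volume a r :=
    ContinuousOn.intervalIntegrable_of_Icc har (by fun_prop)
  have hg : IntervalIntegrable (fun s => (d s : Fin n → ℝ) ⬝ᵥ U *ᵥ d s) volume a r :=
    ((continuous_dotProduct_mulVec U).comp_continuousOn hd).intervalIntegrable_of_Icc har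
  have hFTC : ∫ s in a..r, c ⬝ᵥ (d s : Fin n → ℝ) = c ⬝ᵥ (x r : Fin n → ℝ) - c ⬝ᵥ x a :=
    intervalIntegral.integral_eq_sub_of_hasDerivAt_of_le har (by fun_prop)
      (fun s hs => (hx s hs).dotProduct_const c) hcd
  have hYoung : ∀ s ∈ Icc a r, -2 * (c ⬝ᵥ (d s : Fin n → ℝ)) ≤
      c ⬝ᵥ U⁻¹ *ᵥ c + (d s : Fin n → ℝ) ⬝ᵥ U *ᵥ d s := fun s _ => by
    have := hU.two_mul_dotProduct_le (-c) (d s)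
    simp only [neg_dotProduct, mulVec_neg, dotProduct_neg, neg_neg] at this
    linarith
  have := intervalIntegral.integral_mono_on har (hcd.const_mul (-2))
    (intervalIntegrable_const.add hg) hYoung
  rw [intervalIntegral.integral_const_mul, hFTC, intervalIntegral.integral_add
    intervalIntegrable_const hg, intervalIntegral.integral_const, smul_eq_mul] at this
  rw [dotProduct_sub]
  linarith

lemma antitoneOn_lkFunctional {n : ℕ} {A A₁ P U P₂ P₃ : Matrix (Fin n) (Fin n) ℝ} {Δ ε : ℝ}
    (hP : Pᵀ = P) (hU : U.PosDef) (hε : 0 ≤ ε) (hkey : LKInequality A A₁ P U P₂ P₃ Δ ε)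
    {x d : ℝ → EuclideanSpace ℝ (Fin n)} {a b : ℝ} (hab : a ≤ b) (hba : b - a ≤ Δ)
    (hxc : ContinuousOn x (Icc a b)) (hd : ContinuousOn d (Icc a b))
    (hx : ∀ s ∈ Ioo a b, HasDerivAt x (d s) s)
    (hdx : ∀ s ∈ Ioo a b, (d s : Fin n → ℝ) = A *ᵥ x s + A₁ *ᵥ x a) :
    AntitoneOn (fun r => (x r : Fin n → ℝ) ⬝ᵥ P *ᵥ x r
      + (b - r) * (∫ s in a..r, (d s : Fin n → ℝ) ⬝ᵥ U *ᵥ d s)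
      + ε * ∫ s in a..r, ‖x s‖ ^ 2) (Icc a b) := by
  set g : ℝ → ℝ := fun s => (d s : Fin n → ℝ) ⬝ᵥ U *ᵥ d s
  have hg : ContinuousOn g (Icc a b) := (continuous_dotProduct_mulVec U).comp_continuousOn hd
  have hq : ContinuousOn (fun s => ‖x s‖ ^ 2) (Icc a b) := by fun_prop
  refine antitoneOn_of_hasDerivWithinAt_nonpos (convex_Icc a b) ?_ (f' := fun r =>
    2 * ((x r : Fin n → ℝ) ⬝ᵥ P *ᵥ d r) - (∫ s in a..r, g s) + (b - r) * g r + ε * ‖x r‖ ^ 2)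
    (fun r hr => ?_) (fun r hr => ?_)
  · have hprim : ∀ {f : ℝ → ℝ}, ContinuousOn f (Icc a b) →
        ContinuousOn (fun r => ∫ s in a..r, f s) (Icc a b) := fun hf => by
      simpa [uIcc_of_le hab] using
        intervalIntegral.continuousOn_primitive_interval (hf.integrableOn_Icc.mono_set
          (uIcc_of_le hab).subset)
    exact (((continuous_dotProduct_mulVec P).comp_continuousOn hxc).add
      ((continuousOn_const.sub continuousOn_id).mul (hprim hg))).add
      (continuousOn_const.mul (hprim hq))
  · rw [interior_Icc] at hr ⊢
    have hV := (hx r hr).dotProduct_mulVec P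
    rw [← Matrix.dotProduct_transpose_mulVec, hP] at hV
    have hG := ((hasDerivAt_id' r).const_sub b).mul (hasDerivAt_integral_of_continuousOn hg hr)
    have hQ := (hasDerivAt_integral_of_continuousOn hq hr).const_mul ε
    refine (((hV.add hG).add hQ).congr_deriv ?_).hasDerivWithinAt
    ring
  · rw [interior_Icc] at hr
    have hI := neg_two_mul_dotProduct_sub_le hU hr.1.le (hxc.mono (Icc_subset_Icc_right hr.2.le))
      (fun s hs => hx s ⟨hs.1, hs.2.trans hr.2⟩) (hd.mono (Icc_subset_Icc_right hr.2.le))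
      ((P₂ᵀ * A₁)ᵀ *ᵥ x r + (P₃ᵀ * A₁)ᵀ *ᵥ d r)
    have := hkey.derivative_le_zero hε (hdx r hr) (sub_nonneg.2 hr.1.le) (sub_nonneg.2 hr.2.le)
      (by linarith) hI
    rwa [dotProduct_self_eq_norm_sq] at this

lemma lk_interval_estimate {n : ℕ} {A A₁ P U P₂ P₃ : Matrix (Fin n) (Fin n) ℝ} {Δ ε : ℝ}
    (hP : Pᵀ = P) (hU : U.PosDef) (hε : 0 ≤ ε) (hkey : LKInequality A A₁ P U P₂ P₃ Δ ε)
    {x : ℝ → EuclideanSpace ℝ (Fin n)} {a b : ℝ} (hab : a ≤ b) (hba : b - a ≤ Δ)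
    (hx : ∀ s ∈ Icc a b,
      HasDerivWithinAt x (mulVecE A (x s) + mulVecE A₁ (x a)) (Icc a b) s) :
    (∀ r ∈ Icc a b, (x r : Fin n → ℝ) ⬝ᵥ P *ᵥ x r ≤ (x a : Fin n → ℝ) ⬝ᵥ P *ᵥ x a) ∧
      (x b : Fin n → ℝ) ⬝ᵥ P *ᵥ x b + ε * ∫ s in a..b, ‖x s‖ ^ 2 ≤
        (x a : Fin n → ℝ) ⬝ᵥ P *ᵥ x a := by
  have hxc : ContinuousOn x (Icc a b) := fun s hs => (hx s hs).continuousWithinAt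
  have hd : ContinuousOn (fun s => mulVecE A (x s) + mulVecE A₁ (x a)) (Icc a b) := by
    simp only [mulVecE_eq_toEuclideanCLM]
    fun_prop
  have hanti := antitoneOn_lkFunctional hP hU hε hkey hab hba hxc hd
    (fun s hs => (hx s (Ioo_subset_Icc_self hs)).hasDerivAt (Icc_mem_nhds hs.1 hs.2))
    (fun s _ => rfl)
  have ha : a ∈ Icc a b := left_mem_Icc.2 hab
  refine ⟨fun r hr => ?_, ?_⟩
  · have hZ := hanti ha hr hr.1
    simp only [intervalIntegral.integral_same, mul_zero, add_zero] at hZ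
    refine le_trans (le_add_of_le_of_nonneg (le_add_of_nonneg_right (mul_nonneg
      (sub_nonneg.2 hr.2) (intervalIntegral.integral_nonneg hr.1 fun s _ => ?_)))
      (mul_nonneg hε (intervalIntegral.integral_nonneg hr.1 fun s _ => by positivity))) hZ
    simpa only [star_trivial] using hU.posSemidef.dotProduct_mulVec_nonneg _
  · simpa using hanti ha (right_mem_Icc.2 hab) hab

lemma exists_mem_Ico_of_tendsto_atTop {t : ℕ → ℝ} (ht : Tendsto t atTop atTop) {s : ℝ}
    (hs : t 0 ≤ s) : ∃ k, s ∈ Ico (t k) (t (k + 1)) := by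
  have hex : ∃ k, s < t k := (ht.eventually_gt_atTop s).exists
  have hpos : Nat.find hex ≠ 0 := fun h0 => (h0 ▸ Nat.find_spec hex).not_ge hs
  obtain ⟨k, hk⟩ := Nat.exists_eq_succ_of_ne_zero hpos
  refine ⟨k, not_lt.1 (Nat.find_min hex (by omega)), ?_⟩
  rw [← Nat.succ_eq_add_one, ← hk]
  exact Nat.find_spec hex

lemma le_of_forall_mem_Icc_le {t : ℕ → ℝ} (hmono : Monotone t) (ht : Tendsto t atTop atTop)
    {W : ℝ → ℝ} (hW : ∀ k, ∀ r ∈ Icc (t k) (t (k + 1)), W r ≤ W (t k)) {r : ℝ}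
    (hr : t 0 ≤ r) : W r ≤ W (t 0) := by
  have hseq : Antitone (W ∘ t) :=
    antitone_nat_of_succ_le fun k => hW k _ ⟨hmono k.le_succ, le_rfl⟩
  obtain ⟨k, hk⟩ := exists_mem_Ico_of_tendsto_atTop ht hr
  exact (hW k r (Ico_subset_Icc_self hk)).trans (hseq k.zero_le)

lemma integral_le_of_forall_add_integral_le {t : ℕ → ℝ} (hmono : Monotone t)
    (ht : Tendsto t atTop atTop) {W q : ℝ → ℝ} (hq : ContinuousOn q (Ici (t 0)))
    (hq0 : ∀ s, 0 ≤ q s) (hW0 : ∀ k, 0 ≤ W (t k))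
    (hW : ∀ k, W (t (k + 1)) + ∫ s in t k..t (k + 1), q s ≤ W (t k)) {T : ℝ} (hT : t 0 ≤ T) :
    ∫ s in t 0..T, q s ≤ W (t 0) := by
  have hint : ∀ u v, t 0 ≤ u → t 0 ≤ v → IntervalIntegrable q volume u v := fun u v hu hv =>
    (hq.mono fun s hs => le_trans (le_min hu hv) hs.1).intervalIntegrable
  have hsum : ∀ K, W (t K) + ∫ s in t 0..t K, q s ≤ W (t 0) := by
    intro K
    induction K with
    | zero => simp
    | succ K ih =>
      rw [← intervalIntegral.integral_add_adjacent_intervals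
        (hint _ _ le_rfl (hmono K.zero_le)) (hint _ _ (hmono K.zero_le) (hmono (K + 1).zero_le))]
      linarith [hW K]
  obtain ⟨K, hK⟩ := (ht.eventually_ge_atTop T).exists
  have hmono_int : ∫ s in t 0..T, q s ≤ ∫ s in t 0..t K, q s :=
    intervalIntegral.integral_mono_interval le_rfl hT hK (Eventually.of_forall hq0)
      (hint _ _ le_rfl (hmono K.zero_le))
  linarith [hsum K, hW0 K]

lemma lipschitzOnWith_Ici_of_hasDerivWithinAt_Ici {E : Type*} [NormedAddCommGroup E]
    [NormedSpace ℝ E] {f : ℝ → E} {a : ℝ} {K : ℝ≥0} (hf : ContinuousOn f (Ici a))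
    (hf' : ∀ s ≥ a, ∃ f' : E, HasDerivWithinAt f f' (Ici s) s ∧ ‖f'‖ ≤ K) :
    LipschitzOnWith K f (Ici a) := by
  refine LipschitzOnWith.of_dist_le_mul fun u hu v hv => ?_
  wlog huv : u ≤ v generalizing u v
  · rw [dist_comm, dist_comm u]
    exact this v hv u hu (le_of_not_ge huv)
  have hderiv : ∀ s ≥ a, HasDerivWithinAt f (derivWithin f (Ici s) s) (Ici s) s ∧
      ‖derivWithin f (Ici s) s‖ ≤ K := fun s hs => by
    obtain ⟨f', hd, hb⟩ := hf' s hs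
    rw [hd.derivWithin (uniqueDiffWithinAt_Ici s)]
    exact ⟨hd, hb⟩
  have := norm_image_sub_le_of_norm_deriv_right_le_segment
    (hf.mono (Icc_subset_Ici_iff huv |>.2 hu)) (fun s hs => (hderiv s (le_trans hu hs.1)).1)
    (fun s hs => (hderiv s (le_trans hu hs.1)).2) v ⟨huv, le_rfl⟩
  rwa [dist_comm, dist_eq_norm, Real.dist_eq, abs_sub_comm, abs_of_nonneg (sub_nonneg.2 huv)]

-- Barbalat's lemma.
lemma tendsto_zero_of_lipschitzOnWith_of_integral_sq_le {E : Type*} [NormedAddCommGroup E]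
    {f : ℝ → E} {K : ℝ≥0} {C : ℝ} (hf : LipschitzOnWith K f (Ici 0))
    (hC : ∀ T ≥ 0, ∫ s in 0..T, ‖f s‖ ^ 2 ≤ C) : Tendsto f atTop (𝓝 0) := by
  have hg : ContinuousOn (fun s => ‖f s‖ ^ 2) (Ici 0) := hf.continuousOn.norm.pow 2
  have hgi : IntegrableOn (fun s => ‖f s‖ ^ 2) (Ioi 0) :=
    integrableOn_Ioi_of_intervalIntegral_norm_bounded C 0
      (fun i => (hg.mono Icc_subset_Ici_self).integrableOn_Icc.mono_set Ioc_subset_Icc_self)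
      tendsto_id ((eventually_ge_atTop 0).mono fun T hT => by simpa using hC T hT)
  have hwindow : ∀ η, Tendsto (fun r => ∫ s in r..r + η, ‖f s‖ ^ 2) atTop (𝓝 0) := by
    intro η
    have hF := intervalIntegral_tendsto_integral_Ioi 0 hgi tendsto_id
    have := (hF.comp (tendsto_atTop_add_const_right _ η tendsto_id)).sub hF
    simp only [Function.comp_def, id, sub_self] at this
    refine this.congr' ((eventually_ge_atTop (max 0 (-η))).mono fun r hr => ?_)
    have hint : ∀ T ≥ 0, IntervalIntegrable (fun s => ‖f s‖ ^ 2) volume 0 T := fun T hT =>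
      (hg.mono fun s hs => le_trans (le_min le_rfl hT) hs.1).intervalIntegrable
    exact intervalIntegral.integral_interval_sub_left
      (hint _ (by linarith [le_of_max_le_right hr])) (hint _ (le_of_max_le_left hr))
  rw [Metric.tendsto_nhds]
  intro δ hδ
  set η := δ / (2 * (K + 1))
  have hη : 0 < η := by positivity
  have hKη : K * η ≤ δ / 2 := by
    rw [mul_div_assoc', div_le_div_iff₀ (by positivity) two_pos]
    nlinarith [K.coe_nonneg]
  filter_upwards [(hwindow η).eventually (gt_mem_nhds (show 0 < η * (δ / 2) ^ 2 by positivity)),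
    eventually_ge_atTop 0] with r hr hr0
  rw [dist_zero_right]
  by_contra! hfr
  have hlow : ∀ s ∈ Icc r (r + η), (δ / 2) ^ 2 ≤ ‖f s‖ ^ 2 := fun s hs => by
    have hlip := hf.norm_sub_le (le_trans hr0 hs.1 : (0 : ℝ) ≤ s) hr0
    rw [Real.norm_eq_abs, abs_of_nonneg (sub_nonneg.2 hs.1)] at hlip
    have : K * (s - r) ≤ K * η := mul_le_mul_of_nonneg_left (by linarith [hs.2]) K.coe_nonneg
    have := norm_sub_norm_le (f r) (f s)
    rw [norm_sub_rev] at this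
    gcongr
    linarith
  have hint : IntervalIntegrable (fun s => ‖f s‖ ^ 2) volume r (r + η) :=
    (hg.mono fun s hs => le_trans (le_min hr0 (by linarith)) hs.1).intervalIntegrable
  have := intervalIntegral.integral_mono_on (by linarith) intervalIntegrable_const hint hlow
  simp only [intervalIntegral.integral_const, smul_eq_mul, add_sub_cancel_left] at this
  linarith

lemma IsSolution.lipschitzOnWith {n : ℕ} {A A₁ : Matrix (Fin n) (Fin n) ℝ} {t : ℕ → ℝ}
    {x : ℝ → EuclideanSpace ℝ (Fin n)} (hx : IsSolution A A₁ t x) (ht0 : t 0 = 0)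
    (hmono : Monotone t) (ht : Tendsto t atTop atTop) {B : ℝ} (hB : ∀ s ≥ 0, ‖x s‖ ≤ B) :
    LipschitzOnWith (Real.toNNReal ((sigmaMax A + sigmaMax A₁) * B)) x (Ici 0) := by
  refine lipschitzOnWith_Ici_of_hasDerivWithinAt_Ici hx.1 fun s hs => ?_
  obtain ⟨k, hk⟩ := exists_mem_Ico_of_tendsto_atTop ht (ht0 ▸ hs : t 0 ≤ s)
  have htk : 0 ≤ t k := ht0 ▸ hmono k.zero_le
  refine ⟨_, (hx.2 k s (Ico_subset_Icc_self hk)).mono_of_mem_nhdsWithin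
    (Icc_mem_nhdsGE_of_mem hk), ?_⟩
  have hσ : 0 ≤ sigmaMax A := norm_nonneg _
  have hσ₁ : 0 ≤ sigmaMax A₁ := norm_nonneg _
  calc ‖mulVecE A (x s) + mulVecE A₁ (x (t k))‖
      ≤ sigmaMax A * ‖x s‖ + sigmaMax A₁ * ‖x (t k)‖ :=
        (norm_add_le _ _).trans (add_le_add (norm_mulVecE_le _ _) (norm_mulVecE_le _ _))
    _ ≤ sigmaMax A * B + sigmaMax A₁ * B :=
        add_le_add (mul_le_mul_of_nonneg_left (hB s hs) hσ)
          (mul_le_mul_of_nonneg_left (hB (t k) htk) hσ₁)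
    _ = (sigmaMax A + sigmaMax A₁) * B := (add_mul _ _ _).symm
    _ ≤ _ := Real.le_coe_toNNReal _

theorem sampled_data_stable_of_LK_LMIs_general {n : ℕ} (A A₁ : Matrix (Fin n) (Fin n) ℝ)
    (Δ : ℝ)
    (P U P₂ P₃ : Matrix (Fin n) (Fin n) ℝ) (hP : P.PosDef) (hU : U.PosDef)
    (hLMI1 : ∀ y : Fin n ⊕ Fin n → ℝ, y ≠ 0 →
      y ⬝ᵥ (Matrix.fromBlocks
          (P₂ᵀ * (A + A₁) + (A + A₁)ᵀ * P₂)
          (P - P₂ᵀ + (A + A₁)ᵀ * P₃)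
          (P - P₂ᵀ + (A + A₁)ᵀ * P₃)ᵀ
          (-P₃ - P₃ᵀ + Δ • U)).mulVec y < 0)
    (hLMI2 : ∀ y : (Fin n ⊕ Fin n) ⊕ Fin n → ℝ, y ≠ 0 →
      y ⬝ᵥ (Matrix.fromBlocks
          (Matrix.fromBlocks
            (P₂ᵀ * (A + A₁) + (A + A₁)ᵀ * P₂)
            (P - P₂ᵀ + (A + A₁)ᵀ * P₃)
            (P - P₂ᵀ + (A + A₁)ᵀ * P₃)ᵀ
            (-P₃ - P₃ᵀ))
          (Matrix.fromRows (-(Δ • (P₂ᵀ * A₁))) (-(Δ • (P₃ᵀ * A₁))))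
          (Matrix.fromCols (-(Δ • (P₂ᵀ * A₁)))ᵀ (-(Δ • (P₃ᵀ * A₁)))ᵀ)
          (-(Δ • U))).mulVec y < 0) :
    ∀ t : ℕ → ℝ, AdmissibleSampling Δ t →
      ∀ x : ℝ → EuclideanSpace ℝ (Fin n), IsSolution A A₁ t x →
        Filter.Tendsto x Filter.atTop (nhds 0) := by
  rintro t ⟨ht0, hmono, hstep, ht⟩ x hx
  obtain ⟨ε, hε, hkey⟩ := exists_neg_bound_of_LMIs hU hLMI1 hLMI2
  have hstepk k := lk_interval_estimate hP.1 hU hε.le hkey (hmono k.lt_succ_self).le (hstep k)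
    (hx.2 k)
  set V : ℝ → ℝ := fun s => (x s : Fin n → ℝ) ⬝ᵥ P *ᵥ x s
  have hV0 : ∀ s, 0 ≤ V s := fun s => by
    simpa only [star_trivial] using hP.posSemidef.dotProduct_mulVec_nonneg (x s : Fin n → ℝ)
  have hV : ∀ s ≥ 0, V s ≤ V 0 := fun s hs => by
    simpa [ht0] using le_of_forall_mem_Icc_le hmono.monotone ht (fun k => (hstepk k).1)
      (ht0 ▸ hs : t 0 ≤ s)
  have hL2 : ∀ T ≥ 0, ∫ s in 0..T, ‖x s‖ ^ 2 ≤ V 0 / ε := fun T hT => by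
    have := integral_le_of_forall_add_integral_le hmono.monotone ht
      (q := fun s => ε * ‖x s‖ ^ 2) (by rw [ht0]; exact continuousOn_const.mul (hx.1.norm.pow 2))
      (fun s => by positivity)
      (fun k => hV0 _) (fun k => by simpa [intervalIntegral.integral_const_mul] using (hstepk k).2)
      (ht0 ▸ hT : t 0 ≤ T)
    rw [ht0, intervalIntegral.integral_const_mul] at this
    rwa [le_div_iff₀ hε, mul_comm]
  obtain ⟨εP, hεP, hPlow⟩ := hP.exists_pos_mul_dotProduct_self_le
  have hB : ∀ s ≥ 0, ‖x s‖ ≤ √(V 0 / εP) := fun s hs => by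
    rw [Real.le_sqrt (norm_nonneg _) (div_nonneg (hV0 0) hεP.le), le_div_iff₀ hεP,
      ← dotProduct_self_eq_norm_sq, mul_comm]
    exact (hPlow _).trans (hV s hs)
  exact tendsto_zero_of_lipschitzOnWith_of_integral_sq_le
    (hx.lipschitzOnWith ht0 hmono.monotone ht hB) hL2

/-- Lyapunov–Krasovskii LMI condition for asymptotic stability
of the sampled-data system with variable sampling instants `t_{k+1} - t_k ≤ Δ`. -/
theorem sampled_data_stable_of_LK_LMIs {n : ℕ} (A A₁ : Matrix (Fin n) (Fin n) ℝ)
    (Δ : ℝ) (hΔ : 0 < Δ)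
    (P U P₂ P₃ : Matrix (Fin n) (Fin n) ℝ) (hP : P.PosDef) (hU : U.PosDef)
    (hLMI1 : ∀ y : Fin n ⊕ Fin n → ℝ, y ≠ 0 →
      y ⬝ᵥ (Matrix.fromBlocks
          (P₂ᵀ * (A + A₁) + (A + A₁)ᵀ * P₂)
          (P - P₂ᵀ + (A + A₁)ᵀ * P₃)
          (P - P₂ᵀ + (A + A₁)ᵀ * P₃)ᵀ
          (-P₃ - P₃ᵀ + Δ • U)).mulVec y < 0)
    (hLMI2 : ∀ y : (Fin n ⊕ Fin n) ⊕ Fin n → ℝ, y ≠ 0 →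
      y ⬝ᵥ (Matrix.fromBlocks
          (Matrix.fromBlocks
            (P₂ᵀ * (A + A₁) + (A + A₁)ᵀ * P₂)
            (P - P₂ᵀ + (A + A₁)ᵀ * P₃)
            (P - P₂ᵀ + (A + A₁)ᵀ * P₃)ᵀ
            (-P₃ - P₃ᵀ))
          (Matrix.fromRows (-(Δ • (P₂ᵀ * A₁))) (-(Δ • (P₃ᵀ * A₁))))
          (Matrix.fromCols (-(Δ • (P₂ᵀ * A₁)))ᵀ (-(Δ • (P₃ᵀ * A₁)))ᵀ)
          (-(Δ • U))).mulVec y < 0) :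
    ∀ t : ℕ → ℝ, AdmissibleSampling Δ t →
      ∀ x : ℝ → EuclideanSpace ℝ (Fin n), IsSolution A A₁ t x →
        Filter.Tendsto x Filter.atTop (nhds 0) :=
  sampled_data_stable_of_LK_LMIs_general A A₁ Δ P U P₂ P₃ hP hU hLMI1 hLMI2
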